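/- Let B be an instance of (2,2)-E3-SAT and let I_{3,3}(B) be the one-to-one HRC instance constructed from B as described. Then B is satisfiable if and only if I_{3,3}(B) admits a complete stable matching, where a matching is complete if every resident is matched in it. -/

import Mathlib

/-- A one-to-one HRC instance: residents are partitioned into single residents and
ordered couples; all hospitals have capacity 1. -/
structure HRC1 (R H : Type) where
  singles : List R
  couples : List (R × R)
  singlePref : R → List H
  couplePref : R × R → List (H × H)
  hospPref : H → List R

namespace HRC1

/-- `x` precedes `y` on the strict preference list `l`. -/
def Prefers {α : Type} [DecidableEq α] (l : List α) (x y : α) : Prop :=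
  x ∈ l ∧ y ∈ l ∧ l.idxOf x < l.idxOf y

variable {R H : Type} [DecidableEq R] [DecidableEq H]

/-- `M` is a matching of the instance `I`. -/
def IsMatching (I : HRC1 R H) (M : R → Option H) : Prop :=
  (∀ r₁ r₂ h, M r₁ = some h → M r₂ = some h → r₁ = r₂) ∧
  (∀ r ∈ I.singles, ∀ h, M r = some h → h ∈ I.singlePref r) ∧
  (∀ c ∈ I.couples,
    (M c.1 = none ∧ M c.2 = none) ∨
    ∃ hp ∈ I.couplePref c, M c.1 = some hp.1 ∧ M c.2 = some hp.2) ∧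
  (∀ r, (M r).isSome → r ∈ I.singles ∨ ∃ c ∈ I.couples, r = c.1 ∨ r = c.2)

/-- Hospital `h` is unmatched in `M`. -/
def HospFree (M : R → Option H) (h : H) : Prop := ∀ r, M r ≠ some h

/-- Hospital `h` is unmatched in `M`, or prefers `r` to its current assignee. -/
def HospOpenFor (I : HRC1 R H) (M : R → Option H) (h : H) (r : R) : Prop :=
  HospFree M h ∨ ∃ r', M r' = some h ∧ Prefers (I.hospPref h) r r'

/-- Blocking pair consisting of a single resident `r` and a hospital `h`. -/
def BlockSingle (I : HRC1 R H) (M : R → Option H) (r : R) (h : H) : Prop :=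
  r ∈ I.singles ∧ h ∈ I.singlePref r ∧
  (M r = none ∨ ∃ h', M r = some h' ∧ Prefers (I.singlePref r) h h') ∧
  I.HospOpenFor M h r

/-- Blocking pair consisting of a couple `c` and a pair of hospitals `hp` on its joint list. -/
def BlockCouple (I : HRC1 R H) (M : R → Option H) (c : R × R) (hp : H × H) : Prop :=
  c ∈ I.couples ∧ hp ∈ I.couplePref c ∧
  ((M c.1 = none ∧ M c.2 = none) ∨
    ∃ hp' ∈ I.couplePref c, M c.1 = some hp'.1 ∧ M c.2 = some hp'.2 ∧
      Prefers (I.couplePref c) hp hp') ∧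
  (M c.1 = some hp.1 ∨ I.HospOpenFor M hp.1 c.1) ∧
  (M c.2 = some hp.2 ∨ I.HospOpenFor M hp.2 c.2)

/-- `M` is a stable matching of the instance `I`. -/
def Stable (I : HRC1 R H) (M : R → Option H) : Prop :=
  I.IsMatching M ∧ (∀ r h, ¬ I.BlockSingle M r h) ∧ (∀ c hp, ¬ I.BlockCouple M c hp)

end HRC1

/-- An instance of (2,2)-E3-SAT: `m` clauses, each with exactly 3 literals over `n`
variables (a literal is a variable together with a polarity, `true` for positive);
`occ l` enumerates the two occurrences of the literal `l`, so that each of the literals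
`vᵢ` and `¬vᵢ` appears exactly twice. -/
structure E3SAT (n m : ℕ) where
  clause : Fin m → Fin 3 → Fin n × Bool
  occ : Fin n × Bool → Fin 2 → Fin m × Fin 3
  occ_spec : ∀ l r, clause (occ l r).1 (occ l r).2 = l
  occ_inj : ∀ l, occ l 0 ≠ occ l 1
  occ_surj : ∀ j s, ∃ r, occ (clause j s) r = (j, s)

namespace E3SAT

variable {n m : ℕ}

/-- `B` is satisfiable. -/
def Satisfiable (B : E3SAT n m) : Prop :=
  ∃ f : Fin n → Bool, ∀ j : Fin m, ∃ s : Fin 3, f (B.clause j s).1 = (B.clause j s).2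

/-- The index (`0` or `1`) of the occurrence of its literal that position `s` of
clause `j` constitutes. -/
def rIdx (B : E3SAT n m) (j : Fin m) (s : Fin 3) : Fin 2 :=
  if B.occ (B.clause j s) 0 = (j, s) then 0 else 1

end E3SAT

/-- Residents of the instance `I₃₃(B)`: `X i r = x_{4i+r}`, `K i r = k_{4i+r}`,
`P j s = p_j^{s+1}`, `Q j = q_{j+1}`, `T j = t_{j+1}` (0-based indices). -/
inductive Res3 (n m : ℕ)
  | X (i : Fin n) (r : Fin 4)
  | K (i : Fin n) (r : Fin 4)
  | P (j : Fin m) (s : Fin 6)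
  | Q (j : Fin m)
  | T (j : Fin m)
deriving DecidableEq

/-- Hospitals of the instance `I₃₃(B)`: `Y i r = y_{4i+r}`, `L i r = l_{4i+r}`,
`C j s = c_j^{s+1}`, `Z j r = z_j^{r+1}` (0-based indices). -/
inductive Hos3 (n m : ℕ)
  | Y (i : Fin n) (r : Fin 4)
  | L (i : Fin n) (r : Fin 4)
  | C (j : Fin m) (s : Fin 3)
  | Z (j : Fin m) (r : Fin 5)
deriving DecidableEq

variable {n m : ℕ}

/-- The hospital `c(x_{4i+r})`: for `r ∈ {0,1}` the clause hospital of the `(r+1)`-th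
occurrence of `vᵢ`; for `r ∈ {2,3}` that of the `(r−1)`-th occurrence of `¬vᵢ`. -/
def cX (B : E3SAT n m) (i : Fin n) (r : Fin 4) : Hos3 n m :=
  have hr := r.isLt
  let o := B.occ (i, decide (r.val < 2)) ⟨r.val % 2, by omega⟩
  Hos3.C o.1 o.2

/-- The resident `x(c_j^{s+1})` corresponding to the literal at position `s` of
clause `c_j`. -/
def xOfC (B : E3SAT n m) (j : Fin m) (s : Fin 3) : Res3 n m :=
  let l := B.clause j s
  have hv : (B.rIdx j s).val < 2 := (B.rIdx j s).isLt
  if l.2 then Res3.X l.1 ⟨(B.rIdx j s).val, by omega⟩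
  else Res3.X l.1 ⟨(B.rIdx j s).val + 2, by omega⟩

/-- The one-to-one HRC instance `I₃₃(B)` constructed from the (2,2)-E3-SAT
instance `B`. -/
def instI33 (B : E3SAT n m) : HRC1 (Res3 n m) (Hos3 n m) where
  singles :=
    ((List.finRange m).map fun j => Res3.Q j) ++ ((List.finRange m).map fun j => Res3.T j)
  couples :=
    ((List.finRange n).flatMap fun i =>
      (List.finRange 4).map fun r => (Res3.X i r, Res3.K i r)) ++
    ((List.finRange m).flatMap fun j =>
      (List.finRange 3).map fun s =>
        (Res3.P j ⟨s.val, by have := s.isLt; omega⟩,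
         Res3.P j ⟨s.val + 3, by have := s.isLt; omega⟩))
  singlePref := fun r => match r with
    | Res3.Q j => [Hos3.C j 0, Hos3.C j 1, Hos3.C j 2]
    | Res3.T j => [Hos3.Z j 2, Hos3.Z j 3, Hos3.Z j 4]
    | _ => []
  couplePref := fun c => match c with
    | (Res3.X i r, Res3.K i' r') =>
        if i' = i ∧ r' = r then
          if r = 0 then
            [(Hos3.Y i 0, Hos3.L i 0), (cX B i 0, Hos3.L i 1), (Hos3.Y i 1, Hos3.L i 1)]
          else if r = 1 then
            [(Hos3.Y i 1, Hos3.L i 1), (cX B i 1, Hos3.L i 2), (Hos3.Y i 2, Hos3.L i 2)]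
          else if r = 2 then
            [(Hos3.Y i 3, Hos3.L i 3), (cX B i 2, Hos3.L i 2), (Hos3.Y i 2, Hos3.L i 2)]
          else
            [(Hos3.Y i 0, Hos3.L i 0), (cX B i 3, Hos3.L i 3), (Hos3.Y i 3, Hos3.L i 3)]
        else []
    | (Res3.P j s, Res3.P j' s') =>
        if hc : j' = j ∧ s.val < 3 ∧ s'.val = s.val + 3 then
          [(Hos3.Z j 0, Hos3.Z j 1),
           (Hos3.C j ⟨s.val, hc.2.1⟩, Hos3.Z j ⟨s.val + 2, by have := hc.2.1; omega⟩)]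
        else []
    | _ => []
  hospPref := fun hh => match hh with
    | Hos3.Y i r =>
        if r = 0 then [Res3.X i 0, Res3.X i 3]
        else if r = 1 then [Res3.X i 1, Res3.X i 0]
        else if r = 2 then [Res3.X i 1, Res3.X i 2]
        else [Res3.X i 2, Res3.X i 3]
    | Hos3.L i r =>
        if r = 0 then [Res3.K i 3, Res3.K i 0]
        else if r = 1 then [Res3.K i 0, Res3.K i 1]
        else if r = 2 then [Res3.K i 2, Res3.K i 1]
        else [Res3.K i 3, Res3.K i 2]
    | Hos3.C j s =>
        [Res3.P j ⟨s.val, by have := s.isLt; omega⟩, xOfC B j s, Res3.Q j]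
    | Hos3.Z j r =>
        if r = 0 then [Res3.P j 0, Res3.P j 1, Res3.P j 2]
        else if r = 1 then [Res3.P j 5, Res3.P j 4, Res3.P j 3]
        else if r = 2 then [Res3.P j 3, Res3.T j]
        else if r = 3 then [Res3.P j 4, Res3.T j]
        else [Res3.P j 5, Res3.T j]

/-!
Given a satisfying assignment `f` and, in each clause `c_j`, the position `σ j` of a true literal,
send the couple `(x_{4i+r}, k_{4i+r})` to its first choice when its literal is true and to its last
choice otherwise, the clause couple at position `σ j` to `(z_j^1, z_j^2)` and the two others to
`(c_j^s, z_j^{s+2})`, and `q_j`, `t_j` to `c_j^{σ j}`, `z_j^{σ j + 2}`. This is a perfect matching,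
and every hospital that a resident or a couple would rather have is held by someone it ranks
higher; for the clause hospital of a false literal that someone is `p_j^s`.

Conversely, in a complete stable matching `q_j` holds some `c_j^s`. The couple of `x(c_j^s)` cannot
be at its second choice, which contains `c_j^s`, nor at its third, since it would then block with
its second choice (`c_j^s` prefers `x(c_j^s)` to `q_j`). So it is at its first choice, and the
variable gadget admits this only if the literal at `c_j^s` is true under the assignment
"`vᵢ` is true iff `x_{4i}` or `x_{4i+1}` is at its first choice".
-/

namespace HRC1

theorem IsMatching.exists_mem_couplePref {R H : Type} {I : HRC1 R H} {M : R → Option H}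
    (hM : I.IsMatching M) {c : R × R} (hc : c ∈ I.couples) (hsome : (M c.1).isSome) :
    ∃ hp ∈ I.couplePref c, M c.1 = some hp.1 ∧ M c.2 = some hp.2 := by
  rcases hM.2.2.1 c hc with ⟨hnone, -⟩ | h
  · simp [hnone] at hsome
  · exact h

variable {R H : Type} [DecidableEq R]

theorem Prefers.irrefl {α : Type} [DecidableEq α] {l : List α} {x : α} : ¬ Prefers l x x :=
  fun h => lt_irrefl _ h.2.2

theorem Prefers.asymm {α : Type} [DecidableEq α] {l : List α} {x y : α} (h : Prefers l x y) :
    ¬ Prefers l y x :=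
  fun h' => lt_asymm h.2.2 h'.2.2

theorem not_prefers_head {α : Type} [DecidableEq α] (a : α) (l : List α) (x : α) :
    ¬ Prefers (a :: l) x a := by
  simp [Prefers]

theorem Prefers.mem_of_append_singleton {α : Type} [DecidableEq α] {l : List α} {x y : α}
    (h : Prefers (l ++ [y]) x y) : x ∈ l := by
  rcases List.mem_append.1 h.1 with hx | hx
  · exact hx
  · obtain rfl := List.mem_singleton.1 hx
    exact absurd h Prefers.irrefl

theorem hospOpenFor_equiv_iff (I : HRC1 R H) (e : R ≃ H) (h : H) (r : R) :
    I.HospOpenFor (fun r => some (e r)) h r ↔ Prefers (I.hospPref h) r (e.symm h) := by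
  refine ⟨?_, fun hp => Or.inr ⟨e.symm h, by simp, hp⟩⟩
  rintro (hfree | ⟨r', hr', hp⟩)
  · exact absurd (by simp) (hfree (e.symm h))
  · obtain rfl := Option.some_injective _ hr'
    simpa using hp

theorem stable_of_equiv [DecidableEq H] (I : HRC1 R H) (e : R ≃ H)
    (hS : ∀ r ∈ I.singles, e r ∈ I.singlePref r)
    (hC : ∀ c ∈ I.couples, (e c.1, e c.2) ∈ I.couplePref c)
    (hR : ∀ r, r ∈ I.singles ∨ ∃ c ∈ I.couples, r = c.1 ∨ r = c.2)
    (hbS : ∀ r ∈ I.singles, ∀ h, Prefers (I.singlePref r) h (e r) →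
      Prefers (I.hospPref h) (e.symm h) r)
    (hbC : ∀ c ∈ I.couples, ∀ hp, Prefers (I.couplePref c) hp (e c.1, e c.2) →
      Prefers (I.hospPref hp.1) (e.symm hp.1) c.1 ∨ Prefers (I.hospPref hp.2) (e.symm hp.2) c.2) :
    I.Stable fun r => some (e r) := by
  have closed : ∀ h r, Prefers (I.hospPref h) (e.symm h) r →
      ¬ (some (e r) = some h ∨ I.HospOpenFor (fun r => some (e r)) h r) := by
    rintro h r hp (heq | hopen)
    · rw [← Option.some_injective _ heq, Equiv.symm_apply_apply] at hp
      exact Prefers.irrefl hp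
    · exact hp.asymm ((hospOpenFor_equiv_iff I e h r).1 hopen)
  refine ⟨⟨fun r₁ r₂ h h₁ h₂ => e.injective (Option.some_injective _ (h₁.trans h₂.symm)),
    fun r hr h hh => Option.some_injective _ hh ▸ hS r hr,
    fun c hc => Or.inr ⟨_, hC c hc, rfl, rfl⟩, fun r _ => hR r⟩, ?_, ?_⟩
  · rintro r h ⟨hr, -, ⟨⟨⟩⟩ | ⟨h', ⟨⟩, hp⟩, hopen⟩
    exact closed h r (hbS r hr h hp) (Or.inr hopen)
  · rintro c hp ⟨hc, -, ⟨⟨⟩, -⟩ | ⟨hp', -, e₁, e₂, hpref⟩, h₁, h₂⟩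
    obtain rfl : hp' = (e c.1, e c.2) :=
      Prod.ext (Option.some_injective _ e₁).symm (Option.some_injective _ e₂).symm
    rcases hbC c hc hp hpref with h | h
    · exact closed _ _ h h₁
    · exact closed _ _ h h₂

end HRC1

namespace E3SAT

variable (B : E3SAT n m)

theorem occ_rIdx (j : Fin m) (s : Fin 3) : B.occ (B.clause j s) (B.rIdx j s) = (j, s) := by
  unfold rIdx
  split_ifs with h
  · exact h
  · obtain ⟨r, hr⟩ := B.occ_surj j s
    fin_cases r
    exacts [absurd hr h, hr]

theorem rIdx_occ (l : Fin n × Bool) (ρ : Fin 2) : B.rIdx (B.occ l ρ).1 (B.occ l ρ).2 = ρ := by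
  simp only [rIdx, B.occ_spec]
  fin_cases ρ
  · simp
  · simpa using B.occ_inj l

end E3SAT

open Res3 Hos3

theorem clause_of_cX_eq {B : E3SAT n m} {i : Fin n} {r : Fin 4} {j : Fin m} {s : Fin 3}
    (h : cX B i r = C j s) : B.clause j s = (i, decide (r.val < 2)) := by
  simp only [cX, C.injEq] at h
  rw [← h.1, ← h.2, B.occ_spec]

theorem cX_eq_iff_xOfC_eq (B : E3SAT n m) (i : Fin n) (r : Fin 4) (j : Fin m) (s : Fin 3) :
    cX B i r = C j s ↔ xOfC B j s = X i r := by
  constructor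
  · intro h
    simp only [cX, C.injEq] at h
    obtain ⟨rfl, rfl⟩ := h
    fin_cases r <;> simp [xOfC, B.occ_spec, B.rIdx_occ]
  · intro h
    obtain ⟨⟨i', b⟩, hl⟩ : ∃ l, B.clause j s = l := ⟨_, rfl⟩
    obtain ⟨ρ, hρ⟩ : ∃ ρ, B.rIdx j s = ρ := ⟨_, rfl⟩
    have hocc := B.occ_rIdx j s
    simp only [xOfC, hl, hρ] at h hocc
    cases b <;> fin_cases ρ <;> simp only at h hocc <;> obtain ⟨rfl, rfl⟩ := h <;>
      simpa [cX] using congrArg (fun o : Fin m × Fin 3 => (C o.1 o.2 : Hos3 n m)) hocc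

/-- The `y`-indices of the first and of the last choice of the couple `(x_{4i+r}, k_{4i+r})`; its
middle choice is `(c(x_{4i+r}), l_{4i + lastY r})`. -/
def firstY : Fin 4 → Fin 4 := ![0, 1, 3, 0]
def lastY : Fin 4 → Fin 4 := ![1, 2, 2, 3]

/-- The clause couple `(p_j^{s+1}, p_j^{s+4})`. -/
def pFst (j : Fin m) (s : Fin 3) : Res3 n m := P j ⟨s, by omega⟩
def pSnd (j : Fin m) (s : Fin 3) : Res3 n m := P j ⟨s + 3, by omega⟩

section instI33

variable (B : E3SAT n m)

theorem instI33_couplePref_X (i : Fin n) (r : Fin 4) :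
    (instI33 B).couplePref (X i r, K i r) =
      [(Y i (firstY r), L i (firstY r)), (cX B i r, L i (lastY r)),
        (Y i (lastY r), L i (lastY r))] := by
  fin_cases r <;> simp [instI33, firstY, lastY]

theorem instI33_couplePref_P (j : Fin m) (s : Fin 3) :
    (instI33 B).couplePref (pFst j s, pSnd j s) =
      [(Z j 0, Z j 1), (C j s, Z j ⟨s + 2, by omega⟩)] := by
  simp [instI33, pFst, pSnd]

theorem instI33_hospPref_C (j : Fin m) (s : Fin 3) :
    (instI33 B).hospPref (C j s) = [pFst j s, xOfC B j s, Q j] := rfl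

theorem instI33_singlePref_Q (j : Fin m) :
    (instI33 B).singlePref (Q j) = [C j 0, C j 1, C j 2] := rfl

theorem mem_instI33_singles {r : Res3 n m} :
    r ∈ (instI33 B).singles ↔ (∃ j, r = Q j) ∨ ∃ j, r = T j := by
  simp [instI33, eq_comm]

theorem mem_instI33_couples {c : Res3 n m × Res3 n m} :
    c ∈ (instI33 B).couples ↔ (∃ i r, c = (X i r, K i r)) ∨ ∃ j s, c = (pFst j s, pSnd j s) := by
  simp [instI33, pFst, pSnd, eq_comm]

theorem instI33_single_or_couple (r : Res3 n m) :
    r ∈ (instI33 B).singles ∨ ∃ c ∈ (instI33 B).couples, r = c.1 ∨ r = c.2 := by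
  simp only [mem_instI33_singles, mem_instI33_couples]
  rcases r with ⟨i, r⟩ | ⟨i, r⟩ | ⟨j, s⟩ | j | j
  · exact Or.inr ⟨_, Or.inl ⟨i, r, rfl⟩, Or.inl rfl⟩
  · exact Or.inr ⟨_, Or.inl ⟨i, r, rfl⟩, Or.inr rfl⟩
  · by_cases hs : s.val < 3
    · exact Or.inr ⟨_, Or.inr ⟨j, ⟨s, hs⟩, rfl⟩, Or.inl rfl⟩
    · refine Or.inr ⟨_, Or.inr ⟨j, ⟨s - 3, by omega⟩, rfl⟩, Or.inr ?_⟩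
      simp only [pSnd, P.injEq, true_and]
      ext; simp; omega
  · exact Or.inl (Or.inl ⟨j, rfl⟩)
  · exact Or.inl (Or.inr ⟨j, rfl⟩)

end instI33

section satMatching

variable (f : Fin n → Bool) (σ : Fin m → Fin 3)

/-- The matching built from a truth assignment `f` and, for each clause `j`, the position `σ j`
of a literal it makes true. -/
def satAssign : Res3 n m → Hos3 n m
  | X i r => Y i (if f i then r else r + 1)
  | K i r => L i (if f i then r else r + 1)
  | P j s =>
      if h : s.val < 3 then (if s.val = σ j then Z j 0 else C j ⟨s, h⟩)
      else (if s.val = σ j + 3 then Z j 1 else Z j ⟨s - 1, by omega⟩)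
  | Q j => C j (σ j)
  | T j => Z j ⟨σ j + 2, by omega⟩

def satOccupant : Hos3 n m → Res3 n m
  | Y i r => X i (if f i then r else r - 1)
  | L i r => K i (if f i then r else r - 1)
  | C j s => if s = σ j then Q j else pFst j s
  | Z j t =>
      if t.val = 0 then pFst j (σ j)
      else if t.val = 1 then pSnd j (σ j)
      else if t.val = σ j + 2 then T j
      else P j ⟨t + 1, by omega⟩

def satEquiv : Res3 n m ≃ Hos3 n m where
  toFun := satAssign f σ
  invFun := satOccupant f σ
  left_inv r := by
    rcases r with ⟨i, r⟩ | ⟨i, r⟩ | ⟨j, s⟩ | j | j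
    · by_cases h : f i <;> simp [satAssign, satOccupant, h]
    · by_cases h : f i <;> simp [satAssign, satOccupant, h]
    · obtain ⟨t, ht⟩ : ∃ t, σ j = t := ⟨_, rfl⟩
      fin_cases s <;> fin_cases t <;> simp [satAssign, satOccupant, ht, pFst, pSnd]
    · simp [satAssign, satOccupant]
    · simp [satAssign, satOccupant]
  right_inv h := by
    rcases h with ⟨i, r⟩ | ⟨i, r⟩ | ⟨j, s⟩ | ⟨j, t⟩
    · by_cases h : f i <;> simp [satAssign, satOccupant, h]
    · by_cases h : f i <;> simp [satAssign, satOccupant, h]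
    · by_cases hs : s = σ j <;> simp [satAssign, satOccupant, hs, pFst, Fin.val_ne_of_ne]
    · obtain ⟨u, hu⟩ : ∃ u, σ j = u := ⟨_, rfl⟩
      fin_cases t <;> fin_cases u <;> simp [satAssign, satOccupant, hu, pFst, pSnd]

end satMatching

section forward

open HRC1

variable {B : E3SAT n m} {f : Fin n → Bool} {σ : Fin m → Fin 3}

theorem satAssign_pFst (j : Fin m) (s : Fin 3) :
    satAssign f σ (pFst j s) = if s = σ j then Z j 0 else C j s := by
  simp [satAssign, pFst, Fin.ext_iff]

theorem satAssign_pSnd (j : Fin m) (s : Fin 3) :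
    satAssign f σ (pSnd j s) = if s = σ j then Z j 1 else Z j ⟨s + 2, by omega⟩ := by
  simp [satAssign, pSnd, Fin.ext_iff]

theorem satAssign_X_K_of_true (i : Fin n) (r : Fin 4) (hr : f i = decide (r.val < 2)) :
    (satAssign f σ (X i r), satAssign f σ (K i r)) = (Y i (firstY r), L i (firstY r)) := by
  fin_cases r <;> simp_all [satAssign, firstY]

theorem satAssign_X_K_of_false (i : Fin n) (r : Fin 4) (hr : f i ≠ decide (r.val < 2)) :
    (satAssign f σ (X i r), satAssign f σ (K i r)) = (Y i (lastY r), L i (lastY r)) := by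
  fin_cases r <;> simp_all [satAssign, lastY]

theorem prefers_satOccupant_of_P (j : Fin m) (s : Fin 3) {hp : Hos3 n m × Hos3 n m}
    (hpref : Prefers ((instI33 B).couplePref (pFst j s, pSnd j s)) hp
      (satAssign f σ (pFst j s), satAssign f σ (pSnd j s))) :
    Prefers ((instI33 B).hospPref hp.1) (satOccupant f σ hp.1) (pFst j s) ∨
      Prefers ((instI33 B).hospPref hp.2) (satOccupant f σ hp.2) (pSnd j s) := by
  rw [instI33_couplePref_P, satAssign_pFst, satAssign_pSnd] at hpref
  by_cases hs : s = σ j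
  · simp only [hs, if_true] at hpref
    exact absurd hpref (not_prefers_head _ _ _)
  simp only [hs, if_false] at hpref
  obtain rfl := List.mem_singleton.1 (Prefers.mem_of_append_singleton (l := [_]) hpref)
  obtain ⟨t, ht⟩ : ∃ t, σ j = t := ⟨_, rfl⟩
  fin_cases s <;> fin_cases t <;> simp_all [Prefers, satOccupant, instI33, pFst, pSnd]

theorem prefers_satOccupant_of_single {r : Res3 n m} (hr : r ∈ (instI33 B).singles)
    {h : Hos3 n m}
    (hpref : Prefers ((instI33 B).singlePref r) h (satAssign f σ r)) :
    Prefers ((instI33 B).hospPref h) (satOccupant f σ h) r := by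
  rw [mem_instI33_singles] at hr
  rcases hr with ⟨j, rfl⟩ | ⟨j, rfl⟩
  all_goals
    obtain ⟨t, ht⟩ : ∃ t, σ j = t := ⟨_, rfl⟩
    have hmem := hpref.1
    simp only [instI33, List.mem_cons, List.not_mem_nil, or_false] at hmem
    rcases hmem with rfl | rfl | rfl <;>
      fin_cases t <;> simp_all [Prefers, satAssign, satOccupant, instI33, pFst]

variable (hσ : ∀ j, f (B.clause j (σ j)).1 = (B.clause j (σ j)).2)
include hσ

theorem cX_ne_of_false {i : Fin n} {r : Fin 4} (hr : f i ≠ decide (r.val < 2)) (j : Fin m) :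
    cX B i r ≠ C j (σ j) := by
  intro h
  have := hσ j
  rw [clause_of_cX_eq h] at this
  exact hr this

theorem prefers_satOccupant_cX {i : Fin n} {r : Fin 4} (hr : f i ≠ decide (r.val < 2)) :
    Prefers ((instI33 B).hospPref (cX B i r)) (satOccupant f σ (cX B i r)) (X i r) := by
  obtain ⟨j, s, hjs⟩ : ∃ j s, cX B i r = C j s := ⟨_, _, rfl⟩
  have hs : s ≠ σ j := by
    rintro rfl
    exact cX_ne_of_false hσ hr j hjs
  rw [hjs, instI33_hospPref_C, (cX_eq_iff_xOfC_eq B i r j s).1 hjs]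
  simp [satOccupant, hs, Prefers, pFst]

theorem prefers_satOccupant_of_X (i : Fin n) (r : Fin 4) {hp : Hos3 n m × Hos3 n m}
    (hpref : Prefers ((instI33 B).couplePref (X i r, K i r)) hp
      (satAssign f σ (X i r), satAssign f σ (K i r))) :
    Prefers ((instI33 B).hospPref hp.1) (satOccupant f σ hp.1) (X i r) ∨
      Prefers ((instI33 B).hospPref hp.2) (satOccupant f σ hp.2) (K i r) := by
  rw [instI33_couplePref_X] at hpref
  by_cases hr : f i = decide (r.val < 2)
  · rw [satAssign_X_K_of_true i r hr] at hpref
    exact absurd hpref (not_prefers_head _ _ _)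
  rw [satAssign_X_K_of_false i r hr] at hpref
  rcases List.mem_pair.1 (Prefers.mem_of_append_singleton (l := [_, _]) hpref) with rfl | rfl
  · have h₃ : (0 : Fin 4) - 1 = 3 := rfl
    fin_cases r <;> cases hfi : f i <;> simp_all [Prefers, satOccupant, instI33, firstY]
  · exact Or.inl (prefers_satOccupant_cX hσ hr)

theorem instI33_stable_satEquiv : (instI33 B).Stable fun r => some (satEquiv f σ r) := by
  refine stable_of_equiv _ _ ?_ ?_ (instI33_single_or_couple B)
    (fun r hr h => prefers_satOccupant_of_single hr) ?_
  · intro r hr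
    rcases (mem_instI33_singles B).1 hr with ⟨j, rfl⟩ | ⟨j, rfl⟩ <;>
      obtain ⟨t, ht⟩ : ∃ t, σ j = t := ⟨_, rfl⟩ <;>
      fin_cases t <;> simp [satEquiv, satAssign, instI33, ht]
  · intro c hc
    rcases (mem_instI33_couples B).1 hc with ⟨i, r, rfl⟩ | ⟨j, s, rfl⟩
    · show (satAssign f σ (X i r), satAssign f σ (K i r)) ∈ _
      by_cases hr : f i = decide (r.val < 2)
      · simp [satAssign_X_K_of_true i r hr, instI33_couplePref_X]
      · simp [satAssign_X_K_of_false i r hr, instI33_couplePref_X]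
    · show (satAssign f σ (pFst j s), satAssign f σ (pSnd j s)) ∈ _
      rw [instI33_couplePref_P, satAssign_pFst, satAssign_pSnd]
      split_ifs <;> simp
  · intro c hc hp
    rcases (mem_instI33_couples B).1 hc with ⟨i, r, rfl⟩ | ⟨j, s, rfl⟩
    · exact prefers_satOccupant_of_X hσ i r
    · exact prefers_satOccupant_of_P j s

end forward

section backward

open HRC1

variable {B : E3SAT n m} {M : Res3 n m → Option (Hos3 n m)}

def truthOf (M : Res3 n m → Option (Hos3 n m)) (i : Fin n) : Bool :=
  decide (M (X i 0) = some (Y i 0) ∨ M (X i 1) = some (Y i 1))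

theorem couplePref_X_cases {i : Fin n} {r : Fin 4}
    (h : ∃ hp ∈ (instI33 B).couplePref (X i r, K i r),
      M (X i r) = some hp.1 ∧ M (K i r) = some hp.2) :
    (M (X i r) = some (Y i (firstY r)) ∧ M (K i r) = some (L i (firstY r))) ∨
      (M (X i r) = some (cX B i r) ∧ M (K i r) = some (L i (lastY r))) ∨
      (M (X i r) = some (Y i (lastY r)) ∧ M (K i r) = some (L i (lastY r))) := by
  obtain ⟨hp, hmem, h₁, h₂⟩ := h
  rw [instI33_couplePref_X] at hmem
  simp only [List.mem_cons, List.not_mem_nil, or_false] at hmem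
  rcases hmem with rfl | rfl | rfl
  exacts [Or.inl ⟨h₁, h₂⟩, Or.inr (Or.inl ⟨h₁, h₂⟩), Or.inr (Or.inr ⟨h₁, h₂⟩)]

/-- In the variable gadget, couples `x_{4i}`/`x_{4i+1}` and `x_{4i+2}`/`x_{4i+3}` cannot both
hold a first choice, so a couple at its first choice forces the truth value of `vᵢ`. -/
theorem truthOf_eq_of_apply_X_eq_firstY (hinj : ∀ r₁ r₂ h, M r₁ = some h → M r₂ = some h → r₁ = r₂)
    {i : Fin n}
    (hx : ∀ r, ∃ hp ∈ (instI33 B).couplePref (X i r, K i r),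
      M (X i r) = some hp.1 ∧ M (K i r) = some hp.2)
    {r : Fin 4} (h : M (X i r) = some (Y i (firstY r))) : truthOf M i = decide (r.val < 2) := by
  have clash : ∀ {r₁ r₂ h}, M r₁ = some h → M r₂ = some h → r₁ ≠ r₂ → False :=
    fun h₁ h₂ hne => hne (hinj _ _ _ h₁ h₂)
  have first₀ : M (X i 0) = some (Y i 0) ∨ M (X i 1) = some (Y i 1) →
      M (X i 0) = some (Y i 0) ∧ M (K i 0) = some (L i 0) := by
    have opt₀ := couplePref_X_cases (hx 0)
    simp only [firstY, lastY] at opt₀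
    rintro (h₀ | h₁)
    · rcases opt₀ with h' | ⟨h', -⟩ | ⟨h', -⟩
      · exact h'
      all_goals simp [h₀, cX] at h'
    · have k₁ : M (K i 1) = some (L i 1) := by
        rcases couplePref_X_cases (hx 1) with ⟨-, h'⟩ | ⟨h', -⟩ | ⟨h', -⟩
        · exact h'
        all_goals simp [h₁, cX, lastY] at h'
      rcases opt₀ with h' | ⟨-, h'⟩ | ⟨-, h'⟩
      · exact h'
      all_goals exact (clash h' k₁ (by simp)).elim
  fin_cases r <;> simp [firstY] at h
  · simp [truthOf, h]
  · simp [truthOf, h]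
  · simp only [truthOf, decide_eq_decide]
    refine iff_of_false (fun h₀₁ => ?_) (by simp)
    obtain ⟨x₀, k₀⟩ := first₀ h₀₁
    have k₂ : M (K i 2) = some (L i 3) := by
      rcases couplePref_X_cases (hx 2) with ⟨-, h'⟩ | ⟨h', -⟩ | ⟨h', -⟩
      · exact h'
      all_goals simp [h, cX, lastY] at h'
    rcases couplePref_X_cases (hx 3) with ⟨h', -⟩ | ⟨-, h'⟩ | ⟨h', -⟩
    · exact clash h' x₀ (by simp)
    · exact clash h' k₂ (by simp)
    · exact clash h' h (by simp)
  · simp only [truthOf, decide_eq_decide]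
    refine iff_of_false (fun h₀₁ => clash h (first₀ h₀₁).1 (by simp)) (by simp)

theorem apply_X_eq_firstY_of_stable (hst : (instI33 B).Stable M) {j : Fin m} {s : Fin 3}
    (hQ : M (Q j) = some (C j s)) {i : Fin n} {r : Fin 4} (hxc : xOfC B j s = X i r)
    (hx : ∃ hp ∈ (instI33 B).couplePref (X i r, K i r),
      M (X i r) = some hp.1 ∧ M (K i r) = some hp.2) :
    M (X i r) = some (Y i (firstY r)) := by
  have hc := (cX_eq_iff_xOfC_eq B i r j s).2 hxc
  rcases couplePref_X_cases hx with ⟨h, -⟩ | ⟨h, -⟩ | ⟨h₁, h₂⟩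
  · exact h
  · rw [hc] at h
    exact absurd (hst.1.1 _ _ _ h hQ) (by simp)
  · refine (hst.2.2 (X i r, K i r) (cX B i r, L i (lastY r)) ⟨?_, ?_, ?_, ?_, Or.inl h₂⟩).elim
    · exact (mem_instI33_couples B).2 (Or.inl ⟨i, r, rfl⟩)
    · simp [instI33_couplePref_X]
    · refine Or.inr ⟨(Y i (lastY r), L i (lastY r)), by simp [instI33_couplePref_X], h₁, h₂, ?_⟩
      rw [instI33_couplePref_X]
      fin_cases r <;> simp [Prefers, firstY, lastY, cX]
    · refine Or.inr (Or.inr ⟨Q j, hc ▸ hQ, ?_⟩)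
      rw [hc, instI33_hospPref_C, hxc]
      simp [Prefers, pFst]

end backward

theorem satisfiable_of_complete_stable {B : E3SAT n m} {M : Res3 n m → Option (Hos3 n m)}
    (hst : (instI33 B).Stable M) (hcomp : ∀ r, (M r).isSome) : B.Satisfiable := by
  have hx : ∀ i r, ∃ hp ∈ (instI33 B).couplePref (X i r, K i r),
      M (X i r) = some hp.1 ∧ M (K i r) = some hp.2 := fun i r =>
    hst.1.exists_mem_couplePref ((mem_instI33_couples B).2 (Or.inl ⟨i, r, rfl⟩)) (hcomp _)
  refine ⟨truthOf M, fun j => ?_⟩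
  obtain ⟨h, hQ⟩ := Option.isSome_iff_exists.1 (hcomp (Q j))
  have hmem := hst.1.2.1 (Q j) ((mem_instI33_singles B).2 (Or.inl ⟨j, rfl⟩)) h hQ
  obtain ⟨s, rfl⟩ : ∃ s, h = C j s := by
    simp only [instI33_singlePref_Q, List.mem_cons, List.not_mem_nil, or_false] at hmem
    rcases hmem with rfl | rfl | rfl <;> exact ⟨_, rfl⟩
  obtain ⟨i, r, hxc⟩ : ∃ i r, xOfC B j s = X i r := by
    simp only [xOfC]
    split_ifs <;> exact ⟨_, _, rfl⟩
  refine ⟨s, ?_⟩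
  rw [clause_of_cX_eq ((cX_eq_iff_xOfC_eq B i r j s).2 hxc)]
  exact truthOf_eq_of_apply_X_eq_firstY hst.1.1 (hx i)
    (apply_X_eq_firstY_of_stable hst hQ hxc (hx i r))

/-- `B` is satisfiable if and only if `I₃₃(B)` admits a complete stable matching
(one in which every resident is matched). -/
theorem satisfiable_iff_instI33_admits_complete_stable {n m : ℕ} (B : E3SAT n m) :
    B.Satisfiable ↔
      ∃ M : Res3 n m → Option (Hos3 n m),
        (instI33 B).Stable M ∧ ∀ r, (M r).isSome := by
  constructor
  · rintro ⟨f, hf⟩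
    choose σ hσ using hf
    exact ⟨_, instI33_stable_satEquiv hσ, fun r => rfl⟩
  · rintro ⟨M, hst, hcomp⟩
    exact satisfiable_of_complete_stable hst hcomp
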